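/- Let K be an invertible 3×3 real matrix whose third row is (0,0,1), D = diag(1,1,−1), C = K⁻ᵀ D K⁻¹, S = K D K⁻¹. Let x₁, x₂ be affine image points in ℝ² with lifts x̂₁, x̂₂, θ the angle between the rays K⁻¹x̂₁ and K⁻¹x̂₂, and l₁ = C S x̂₁ the reflected polar of x₁. Then cos θ < 0 if and only if x₁ and x₂ lie strictly on opposite sides of the line l₁, i.e. (l₁ᵀ x̂₁)·(l₁ᵀ x̂₂) < 0. -/

import Mathlib

/-!
Since `D * D = 1`, the product `C * S` collapses to `K⁻ᵀ * K⁻¹`. Writing `u = K⁻¹ x̂₁` and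
`v = K⁻¹ x̂₂`, this gives `l₁ ⬝ x̂₁ = ‖u‖²` and `l₁ ⬝ x̂₂ = ⟪u, v⟫`, so both `cos θ` and the
product `(l₁ ⬝ x̂₁) (l₁ ⬝ x̂₂)` have the sign of `⟪u, v⟫`.
-/

open Matrix

/-- The homogeneous lift `(y₁, y₂, 1)` of an affine image point `y ∈ ℝ²`. -/
def homLift (y : Fin 2 → ℝ) : Fin 3 → ℝ := ![y 0, y 1, 1]

namespace InnerProductGeometry

variable {V : Type*} [NormedAddCommGroup V] [InnerProductSpace ℝ V]

theorem cos_angle_neg_iff_inner_neg (x y : V) :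
    Real.cos (angle x y) < 0 ↔ inner ℝ x y < 0 := by
  rw [cos_angle, div_neg_iff]
  have hnorm : 0 ≤ ‖x‖ * ‖y‖ := by positivity
  constructor
  · rintro (⟨_, hneg⟩ | ⟨hinner, _⟩)
    · exact absurd hneg hnorm.not_gt
    · exact hinner
  · intro hinner
    have hx : x ≠ 0 := by rintro rfl; simp at hinner
    have hy : y ≠ 0 := by rintro rfl; simp at hinner
    exact Or.inr ⟨hinner, by positivity⟩

end InnerProductGeometry

namespace Matrix

theorem dotProduct_self_mul_neg_iff {n R : Type*} [Fintype n] [CommRing R] [LinearOrder R]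
    [IsStrictOrderedRing R] (u v : n → R) : (u ⬝ᵥ u) * (u ⬝ᵥ v) < 0 ↔ u ⬝ᵥ v < 0 := by
  rcases eq_or_ne u 0 with rfl | hu
  · simp
  · have hpos : 0 < u ⬝ᵥ u :=
      (Fintype.sum_nonneg fun i => mul_self_nonneg (u i)).lt_of_ne'
        (dotProduct_self_eq_zero.not.mpr hu)
    simpa only [mul_zero] using mul_lt_mul_iff_right₀ (b := u ⬝ᵥ v) (c := 0) hpos

variable {n α : Type*} [Fintype n] [CommRing α]

theorem transpose_mul_self_mulVec_dotProduct (M : Matrix n n α) (a b : n → α) :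
    (Mᵀ * M) *ᵥ a ⬝ᵥ b = M *ᵥ a ⬝ᵥ M *ᵥ b := by
  rw [← mulVec_mulVec, mulVec_transpose, dotProduct_mulVec]

variable [DecidableEq n]

/-- For singular `K`, `K⁻¹ = 0` and both sides vanish. -/
theorem nonsing_inv_mul_cancel_left_mul_nonsing_inv (K B : Matrix n n α) :
    K⁻¹ * (K * (B * K⁻¹)) = B * K⁻¹ := by
  by_cases hK : IsUnit K.det
  · exact nonsing_inv_mul_cancel_left K _ hK
  · simp [nonsing_inv_apply_not_isUnit K hK]

theorem transpose_inv_mul_mul_inv_mul_mul_mul_inv (K D : Matrix n n α) (hD : D * D = 1) :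
    Kᵀ⁻¹ * D * K⁻¹ * (K * D * K⁻¹) = K⁻¹ᵀ * K⁻¹ := by
  rw [transpose_nonsing_inv]
  simp only [Matrix.mul_assoc, nonsing_inv_mul_cancel_left_mul_nonsing_inv]
  rw [← Matrix.mul_assoc D D, hD, Matrix.one_mul]

end Matrix

theorem cos_angle_neg_iff_opposite_sides_general (K : Matrix (Fin 3) (Fin 3) ℝ)
    (D C S : Matrix (Fin 3) (Fin 3) ℝ)
    (hD : D = Matrix.diagonal ![1, 1, -1])
    (hC : C = (Kᵀ)⁻¹ * D * K⁻¹)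
    (hS : S = K * D * K⁻¹)
    (x₁ x₂ : Fin 2 → ℝ) (l₁ : Fin 3 → ℝ)
    (hl₁ : l₁ = C.mulVec (S.mulVec (homLift x₁)))
    (θ : ℝ)
    (hθ : θ = InnerProductGeometry.angle
        ((WithLp.equiv 2 (Fin 3 → ℝ)).symm (K⁻¹.mulVec (homLift x₁)))
        ((WithLp.equiv 2 (Fin 3 → ℝ)).symm (K⁻¹.mulVec (homLift x₂)))) :
    Real.cos θ < 0 ↔ (l₁ ⬝ᵥ homLift x₁) * (l₁ ⬝ᵥ homLift x₂) < 0 := by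
  have hDD : D * D = 1 := by
    rw [hD, diagonal_mul_diagonal, ← diagonal_one]
    congr 1
    ext i
    fin_cases i <;> norm_num
  subst hθ hl₁ hC hS
  rw [mulVec_mulVec, transpose_inv_mul_mul_inv_mul_mul_mul_inv K D hDD,
    transpose_mul_self_mulVec_dotProduct, transpose_mul_self_mulVec_dotProduct,
    dotProduct_self_mul_neg_iff, InnerProductGeometry.cos_angle_neg_iff_inner_neg,
    EuclideanSpace.inner_toLp_toLp, star_trivial, dotProduct_comm]
  rfl

/-- The sign of `cos θ`, for the angle `θ` between the rays of `x₁` and `x₂`, is negative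
exactly when `x₁` and `x₂` lie strictly on opposite sides of the reflected polar
`l₁ = C S x̂₁` of `x₁`. -/
theorem cos_angle_neg_iff_opposite_sides (K : Matrix (Fin 3) (Fin 3) ℝ)
    (hK : IsUnit K.det) (hKrow : K 2 = ![0, 0, 1])
    (D C S : Matrix (Fin 3) (Fin 3) ℝ)
    (hD : D = Matrix.diagonal ![1, 1, -1])
    (hC : C = (Kᵀ)⁻¹ * D * K⁻¹)
    (hS : S = K * D * K⁻¹)
    (x₁ x₂ : Fin 2 → ℝ) (l₁ : Fin 3 → ℝ)
    (hl₁ : l₁ = C.mulVec (S.mulVec (homLift x₁)))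
    (θ : ℝ)
    (hθ : θ = InnerProductGeometry.angle
        ((WithLp.equiv 2 (Fin 3 → ℝ)).symm (K⁻¹.mulVec (homLift x₁)))
        ((WithLp.equiv 2 (Fin 3 → ℝ)).symm (K⁻¹.mulVec (homLift x₂)))) :
    Real.cos θ < 0 ↔ (l₁ ⬝ᵥ homLift x₁) * (l₁ ⬝ᵥ homLift x₂) < 0 :=
  cos_angle_neg_iff_opposite_sides_general K D C S hD hC hS x₁ x₂ l₁ hl₁ θ hθ
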